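/- Let h be a positive integer, let d and U_1, ..., U_h be nonnegative real numbers, and let R be a natural number with R ≤ h such that ∑_{j=1}^R U_j ≤ d. Suppose that real numbers x_1, ..., x_h satisfy 0 ≤ x_j ≤ U_j for every j and ∑_{j=1}^h x_j = d. Then ∑_{j=1}^h j·x_j ≥ ∑_{j=1}^R j·U_j. -/

import Mathlib

/-!
Relative to the threshold weight `R`, every index `j ≤ R` gains at most `(R - j) U_j` and every
index `j > R` loses nothing: `(j - R) x_j ≥ (j - R) U_j` for `j ≤ R` because `x_j ≤ U_j`, and
`(j - R) x_j ≥ 0` for `j > R`. Summing, `∑ j x_j - R ∑ x_j ≥ ∑_{j ≤ R} j U_j - R ∑_{j ≤ R} U_j`,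
and the mass condition `∑_{j ≤ R} U_j ≤ d = ∑ x_j` absorbs the `R`-terms.
-/

open Finset

section Threshold

variable {ι : Type*} [DecidableEq ι] {s t : Finset ι} {w x U : ι → ℝ} {r : ℝ}

theorem sum_sub_mul_le_sum_sub_mul (hts : t ⊆ s) (hwt : ∀ j ∈ t, w j ≤ r)
    (hws : ∀ j ∈ s \ t, r ≤ w j) (hxU : ∀ j ∈ t, x j ≤ U j) (hx0 : ∀ j ∈ s \ t, 0 ≤ x j) :
    ∑ j ∈ t, (w j - r) * U j ≤ ∑ j ∈ s, (w j - r) * x j := by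
  rw [← sum_sdiff hts]
  have hlow : ∑ j ∈ t, (w j - r) * U j ≤ ∑ j ∈ t, (w j - r) * x j :=
    sum_le_sum fun j hj => mul_le_mul_of_nonpos_left (hxU j hj) (sub_nonpos.mpr (hwt j hj))
  have hhigh : 0 ≤ ∑ j ∈ s \ t, (w j - r) * x j :=
    sum_nonneg fun j hj => mul_nonneg (sub_nonneg.mpr (hws j hj)) (hx0 j hj)
  linarith

theorem sum_mul_le_sum_mul_of_threshold (hr : 0 ≤ r) (hts : t ⊆ s) (hwt : ∀ j ∈ t, w j ≤ r)
    (hws : ∀ j ∈ s \ t, r ≤ w j) (hxU : ∀ j ∈ t, x j ≤ U j) (hx0 : ∀ j ∈ s \ t, 0 ≤ x j)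
    (hmass : ∑ j ∈ t, U j ≤ ∑ j ∈ s, x j) :
    ∑ j ∈ t, w j * U j ≤ ∑ j ∈ s, w j * x j := by
  have key := sum_sub_mul_le_sum_sub_mul hts hwt hws hxU hx0
  simp only [sub_mul, sum_sub_distrib, ← mul_sum] at key
  linarith [mul_le_mul_of_nonneg_left hmass hr]

end Threshold

theorem stmt_0_general (h : ℕ) (d : ℝ) (U x : ℕ → ℝ) (R : ℕ)
    (hR : R ≤ h) (hRU : ∑ j ∈ Finset.Icc 1 R, U j ≤ d)
    (hx0 : ∀ j ∈ Finset.Icc 1 h, 0 ≤ x j)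
    (hxU : ∀ j ∈ Finset.Icc 1 h, x j ≤ U j)
    (hxd : ∑ j ∈ Finset.Icc 1 h, x j = d) :
    ∑ j ∈ Finset.Icc 1 h, (j : ℝ) * x j ≥ ∑ j ∈ Finset.Icc 1 R, (j : ℝ) * U j := by
  have hsub : Icc 1 R ⊆ Icc 1 h := Icc_subset_Icc_right hR
  refine sum_mul_le_sum_mul_of_threshold R.cast_nonneg hsub ?_ ?_
    (fun j hj => hxU j (hsub hj)) (fun j hj => hx0 j (sdiff_subset hj)) (hxd ▸ hRU)
  · intro j hj
    exact_mod_cast (mem_Icc.mp hj).2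
  · intro j hj
    simp only [mem_sdiff, mem_Icc, not_and, not_le] at hj
    exact_mod_cast (hj.2 hj.1.1).le

/-- Lemma 3.1 of the paper: a combinatorial inequality. -/
theorem stmt_0 (h : ℕ) (hh : 0 < h) (d : ℝ) (U x : ℕ → ℝ) (R : ℕ)
    (hd : 0 ≤ d) (hU : ∀ j ∈ Finset.Icc 1 h, 0 ≤ U j)
    (hR : R ≤ h) (hRU : ∑ j ∈ Finset.Icc 1 R, U j ≤ d)
    (hx0 : ∀ j ∈ Finset.Icc 1 h, 0 ≤ x j)
    (hxU : ∀ j ∈ Finset.Icc 1 h, x j ≤ U j)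
    (hxd : ∑ j ∈ Finset.Icc 1 h, x j = d) :
    ∑ j ∈ Finset.Icc 1 h, (j : ℝ) * x j ≥ ∑ j ∈ Finset.Icc 1 R, (j : ℝ) * U j :=
  stmt_0_general h d U x R hR hRU hx0 hxU hxd
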